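/- Define V, Ṽ : (0,∞) → ℝ by V(x) := −8e^{2x}/(1+e^{2x})² and Ṽ(x) := (q₁(x)+q₂(x))/d(x)², where d(x) := (1−2x)·cosh x + (1+4x²+cosh 2x)·sinh x, q₁(x) := 7 − 24x + 32x⁴ + 64x²·cosh 2x − (16+32x)·sinh 2x, and q₂(x) := −(9+8x²)·cosh 4x + (−2+20x)·sinh 4x. Then e^{2x}·(Ṽ(x) − V(x))/x² → −64 as x → +∞. In particular Ṽ(x) − V(x) = O(x²e^{−2x}) as x → +∞, while e^{2x}·|Ṽ(x) − V(x)| → +∞, so Ṽ − V is NOT O(e^{−2x}) as x → +∞. (Example 8.9: an explicit counterexample showing that the asymptotic estimate (IV.1.30) of Chadan–Sabatier, asserting that the potential increment when a bound state is added behaves like a nonzero constant times e^{−2κx}, is incorrect.) -/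
import Mathlib


open Filter Asymptotics

/-- The unperturbed potential of Example 8.9: `V(x) = −8e^{2x}/(1+e^{2x})²`. -/
noncomputable def exampleV (x : ℝ) : ℝ :=
  -8 * Real.exp (2 * x) / (1 + Real.exp (2 * x)) ^ 2

/-- The denominator `d(x) = (1−2x)·cosh x + (1+4x²+cosh 2x)·sinh x` of Example 8.9. -/
noncomputable def exampleD (x : ℝ) : ℝ :=
  (1 - 2 * x) * Real.cosh x + (1 + 4 * x ^ 2 + Real.cosh (2 * x)) * Real.sinh x

/-- `q₁(x) = 7 − 24x + 32x⁴ + 64x²·cosh 2x − (16+32x)·sinh 2x` of Example 8.9. -/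
noncomputable def exampleQ1 (x : ℝ) : ℝ :=
  7 - 24 * x + 32 * x ^ 4 + 64 * x ^ 2 * Real.cosh (2 * x)
    - (16 + 32 * x) * Real.sinh (2 * x)

/-- `q₂(x) = −(9+8x²)·cosh 4x + (−2+20x)·sinh 4x` of Example 8.9. -/
noncomputable def exampleQ2 (x : ℝ) : ℝ :=
  -(9 + 8 * x ^ 2) * Real.cosh (4 * x) + (-2 + 20 * x) * Real.sinh (4 * x)

/-- The perturbed potential of Example 8.9: `Ṽ(x) = (q₁(x)+q₂(x))/d(x)²`. -/
noncomputable def exampleVt (x : ℝ) : ℝ :=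
  (exampleQ1 x + exampleQ2 x) / (exampleD x) ^ 2


noncomputable def exP (x : ℝ) : ℝ :=
  -3 * (x ^ 0 * Real.exp (-x) ^ 12) +
    17 * (x ^ 0 * Real.exp (-x) ^ 8) +
    16 * (x ^ 0 * Real.exp (-x) ^ 6) +
    -9 * (x ^ 0 * Real.exp (-x) ^ 4) +
    -16 * (x ^ 0 * Real.exp (-x) ^ 2) +
    -10 * (x ^ 1 * Real.exp (-x) ^ 12) +
    -2 * (x ^ 1 * Real.exp (-x) ^ 8) +
    -64 * (x ^ 1 * Real.exp (-x) ^ 6) +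
    -62 * (x ^ 1 * Real.exp (-x) ^ 4) +
    -4 * (x ^ 2 * Real.exp (-x) ^ 12) +
    32 * (x ^ 2 * Real.exp (-x) ^ 10) +
    52 * (x ^ 2 * Real.exp (-x) ^ 8) +
    64 * (x ^ 2 * Real.exp (-x) ^ 6) +
    84 * (x ^ 2 * Real.exp (-x) ^ 4) +
    32 * (x ^ 2 * Real.exp (-x) ^ 2) +
    32 * (x ^ 3 * Real.exp (-x) ^ 8) +
    -32 * (x ^ 3 * Real.exp (-x) ^ 4) +
    64 * (x ^ 4 * Real.exp (-x) ^ 8) +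
    64 * (x ^ 4 * Real.exp (-x) ^ 4)

noncomputable def exNn (x : ℝ) : ℝ := exP x + (-5 + 10 * x + -4 * x ^ 2)

noncomputable def exD0 (x : ℝ) : ℝ :=
  (1/16) * (x ^ 0 * Real.exp (-x) ^ 16) +
    (-1/2) * (x ^ 0 * Real.exp (-x) ^ 12) +
    (-1/2) * (x ^ 0 * Real.exp (-x) ^ 10) +
    (7/8) * (x ^ 0 * Real.exp (-x) ^ 8) +
    2 * (x ^ 0 * Real.exp (-x) ^ 6) +
    (3/2) * (x ^ 0 * Real.exp (-x) ^ 4) +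
    (1/2) * (x ^ 0 * Real.exp (-x) ^ 2) +
    (1/2) * (x ^ 1 * Real.exp (-x) ^ 14) +
    1 * (x ^ 1 * Real.exp (-x) ^ 12) +
    (-3/2) * (x ^ 1 * Real.exp (-x) ^ 10) +
    -6 * (x ^ 1 * Real.exp (-x) ^ 8) +
    (-13/2) * (x ^ 1 * Real.exp (-x) ^ 6) +
    -3 * (x ^ 1 * Real.exp (-x) ^ 4) +
    (-1/2) * (x ^ 1 * Real.exp (-x) ^ 2) +
    1 * (x ^ 2 * Real.exp (-x) ^ 14) +
    1 * (x ^ 2 * Real.exp (-x) ^ 12) +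
    -1 * (x ^ 2 * Real.exp (-x) ^ 10) +
    2 * (x ^ 2 * Real.exp (-x) ^ 8) +
    7 * (x ^ 2 * Real.exp (-x) ^ 6) +
    5 * (x ^ 2 * Real.exp (-x) ^ 4) +
    1 * (x ^ 2 * Real.exp (-x) ^ 2) +
    4 * (x ^ 3 * Real.exp (-x) ^ 12) +
    8 * (x ^ 3 * Real.exp (-x) ^ 10) +
    -8 * (x ^ 3 * Real.exp (-x) ^ 6) +
    -4 * (x ^ 3 * Real.exp (-x) ^ 4) +
    4 * (x ^ 4 * Real.exp (-x) ^ 12) +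
    -8 * (x ^ 4 * Real.exp (-x) ^ 8) +
    4 * (x ^ 4 * Real.exp (-x) ^ 4)

noncomputable def exDn (x : ℝ) : ℝ := exD0 x + 1/16

lemma aux0 (i k : ℕ) (hk : k ≠ 0) :
    Tendsto (fun x : ℝ => x ^ i * Real.exp (-x) ^ k) atTop (nhds 0) := by
  obtain ⟨m, rfl⟩ := Nat.exists_eq_succ_of_ne_zero hk
  have h1 : Tendsto (fun x : ℝ => x ^ i * Real.exp (-x)) atTop (nhds 0) :=
    Real.tendsto_pow_mul_exp_neg_atTop_nhds_zero i
  have h2 : Tendsto (fun x : ℝ => Real.exp (-x) ^ m) atTop (nhds (0 ^ m)) :=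
    (Real.tendsto_exp_neg_atTop_nhds_zero).pow m
  have h3 := h1.mul h2
  rw [zero_mul] at h3
  exact h3.congr fun x => by rw [pow_succ]; ring

lemma aux2 (i k : ℕ) (hk : k ≠ 0) :
    Tendsto (fun x : ℝ => x ^ i * Real.exp (-x) ^ k / x ^ 2) atTop (nhds 0) := by
  have h1 := aux0 i k hk
  have h2 : Tendsto (fun x : ℝ => (x ^ 2)⁻¹) atTop (nhds 0) :=
    (tendsto_pow_atTop (by norm_num : (2:ℕ) ≠ 0)).inv_tendsto_atTop
  have h3 := h1.mul h2
  rw [zero_mul] at h3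
  exact h3.congr fun x => by rw [div_eq_mul_inv]

lemma exD0_lim : Tendsto exD0 atTop (nhds 0) := by
  have h := (((((((((((((((((((((((((((((aux0 0 16 (by norm_num)).const_mul ((1/16) : ℝ)).add ((aux0 0 12 (by norm_num)).const_mul ((-1/2) : ℝ))).add ((aux0 0 10 (by norm_num)).const_mul ((-1/2) : ℝ))).add ((aux0 0 8 (by norm_num)).const_mul ((7/8) : ℝ))).add ((aux0 0 6 (by norm_num)).const_mul (2 : ℝ))).add ((aux0 0 4 (by norm_num)).const_mul ((3/2) : ℝ))).add ((aux0 0 2 (by norm_num)).const_mul ((1/2) : ℝ))).add ((aux0 1 14 (by norm_num)).const_mul ((1/2) : ℝ))).add ((aux0 1 12 (by norm_num)).const_mul (1 : ℝ))).add ((aux0 1 10 (by norm_num)).const_mul ((-3/2) : ℝ))).add ((aux0 1 8 (by norm_num)).const_mul (-6 : ℝ))).add ((aux0 1 6 (by norm_num)).const_mul ((-13/2) : ℝ))).add ((aux0 1 4 (by norm_num)).const_mul (-3 : ℝ))).add ((aux0 1 2 (by norm_num)).const_mul ((-1/2) : ℝ))).add ((aux0 2 14 (by norm_num)).const_mul (1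 : ℝ))).add ((aux0 2 12 (by norm_num)).const_mul (1 : ℝ))).add ((aux0 2 10 (by norm_num)).const_mul (-1 : ℝ))).add ((aux0 2 8 (by norm_num)).const_mul (2 : ℝ))).add ((aux0 2 6 (by norm_num)).const_mul (7 : ℝ))).add ((aux0 2 4 (by norm_num)).const_mul (5 : ℝ))).add ((aux0 2 2 (by norm_num)).const_mul (1 : ℝ))).add ((aux0 3 12 (by norm_num)).const_mul (4 : ℝ))).add ((aux0 3 10 (by norm_num)).const_mul (8 : ℝ))).add ((aux0 3 6 (by norm_num)).const_mul (-8 : ℝ))).add ((aux0 3 4 (by norm_num)).const_mul (-4 : ℝ))).add ((aux0 4 12 (by norm_num)).const_mul (4 : ℝ))).add ((aux0 4 8 (by norm_num)).const_mul (-8 : ℝ))).add ((aux0 4 4 (by norm_num)).const_mul (4 : ℝ)))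

  norm_num at h
  exact h.congr fun x => by show _ = exD0 x; unfold exD0; ring

lemma exDn_lim : Tendsto exDn atTop (nhds (1/16)) := by
  unfold exDn
  simpa using exD0_lim.add (tendsto_const_nhds (x := (1/16 : ℝ)))

lemma exP2_lim : Tendsto (fun x : ℝ => exP x / x ^ 2) atTop (nhds 0) := by
  have h := ((((((((((((((((((((aux2 0 12 (by norm_num)).const_mul (-3 : ℝ)).add ((aux2 0 8 (by norm_num)).const_mul (17 : ℝ))).add ((aux2 0 6 (by norm_num)).const_mul (16 : ℝ))).add ((aux2 0 4 (by norm_num)).const_mul (-9 : ℝ))).add ((aux2 0 2 (by norm_num)).const_mul (-16 : ℝ))).add ((aux2 1 12 (by norm_num)).const_mul (-10 : ℝ))).add ((aux2 1 8 (by norm_num)).const_mul (-2 : ℝ))).add ((aux2 1 6 (by norm_num)).const_mul (-64 : ℝ))).add ((aux2 1 4 (by norm_num)).const_mul (-62 : ℝ))).add ((aux2 2 12 (by norm_num)).const_mul (-4 : ℝ))).add ((aux2 2 10 (by norm_num)).const_mul (32 : ℝ))).add ((aux2 2 8 (by norm_num)).const_mul (52 : ℝ))).add ((aux2 2 6 (by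 norm_num)).const_mul (64 : ℝ))).add ((aux2 2 4 (by norm_num)).const_mul (84 : ℝ))).add ((aux2 2 2 (by norm_num)).const_mul (32 : ℝ))).add ((aux2 3 8 (by norm_num)).const_mul (32 : ℝ))).add ((aux2 3 4 (by norm_num)).const_mul (-32 : ℝ))).add ((aux2 4 8 (by norm_num)).const_mul (64 : ℝ))).add ((aux2 4 4 (by norm_num)).const_mul (64 : ℝ)))

  norm_num at h
  refine h.congr fun x => ?_
  show _ = exP x / x ^ 2
  unfold exP
  ring

lemma exDn_eq (x : ℝ) :
    exDn x * Real.exp x ^ 10 = (exampleD x) ^ 2 * (1 + Real.exp (2 * x)) ^ 2 := by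
  have h2 : Real.exp (2 * x) = Real.exp x ^ 2 := by rw [two_mul, Real.exp_add, sq]
  unfold exDn exD0 exampleD
  simp only [Real.cosh_eq, Real.sinh_eq, Real.exp_neg, h2]
  have ht := Real.exp_ne_zero x
  field_simp
  ring

lemma exCore (x : ℝ) (hd : exampleD x ≠ 0) :
    Real.exp (2 * x) * (exampleVt x - exampleV x) *
      ((exampleD x) ^ 2 * (1 + Real.exp (2 * x)) ^ 2) = exNn x * Real.exp x ^ 10 := by
  have h1 : (1 + Real.exp (2 * x)) ≠ 0 := by positivity
  have h2 : Real.exp (2 * x) = Real.exp x ^ 2 := by rw [two_mul, Real.exp_add, sq]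
  have h4 : Real.exp (4 * x) = Real.exp x ^ 4 := by
    rw [show (4 : ℝ) * x = 2 * x + 2 * x by ring, Real.exp_add, h2]; ring
  unfold exampleVt exampleV
  rw [div_sub_div _ _ (pow_ne_zero 2 hd) (pow_ne_zero 2 h1), mul_assoc,
    div_mul_cancel₀ _ (mul_ne_zero (pow_ne_zero 2 hd) (pow_ne_zero 2 h1))]
  unfold exampleQ1 exampleQ2 exampleD exNn exP
  simp only [Real.cosh_eq, Real.sinh_eq, Real.exp_neg, h2, h4]
  have ht := Real.exp_ne_zero x
  field_simp
  ring

lemma exKey (x : ℝ) (hd : exampleD x ≠ 0) :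
    Real.exp (2 * x) * (exampleVt x - exampleV x) = exNn x / exDn x := by
  have h1 : (1 + Real.exp (2 * x)) ≠ 0 := by positivity
  have hDn : exDn x ≠ 0 := by
    intro h0
    have hq := exDn_eq x
    rw [h0, zero_mul] at hq
    exact (mul_ne_zero (pow_ne_zero 2 hd) (pow_ne_zero 2 h1)) hq.symm
  rw [eq_div_iff hDn]
  have ht10 : (Real.exp x ^ 10) ≠ 0 := pow_ne_zero _ (Real.exp_ne_zero x)
  apply mul_right_cancel₀ ht10
  have hr : Real.exp (2 * x) * (exampleVt x - exampleV x) * exDn x * Real.exp x ^ 10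
      = Real.exp (2 * x) * (exampleVt x - exampleV x) * (exDn x * Real.exp x ^ 10) := by
    ring
  rw [hr, exDn_eq x]
  exact exCore x hd

lemma exNn_lim : Tendsto (fun x : ℝ => exNn x / x ^ 2) atTop (nhds (-4)) := by
  have hi : Tendsto (fun x : ℝ => x⁻¹) atTop (nhds 0) := tendsto_inv_atTop_zero
  have hpoly : Tendsto (fun x : ℝ => -5 * (x⁻¹) ^ 2 + 10 * x⁻¹ + -4) atTop (nhds (-4)) := by
    have h := (((hi.pow 2).const_mul (-5 : ℝ)).add (hi.const_mul (10 : ℝ))).add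
      (tendsto_const_nhds (x := (-4 : ℝ)))
    norm_num at h
    exact h.congr fun x => by ring
  have hev : (fun x : ℝ => exP x / x ^ 2 + (-5 * (x⁻¹) ^ 2 + 10 * x⁻¹ + -4))
      =ᶠ[atTop] (fun x : ℝ => exNn x / x ^ 2) := by
    filter_upwards [eventually_ge_atTop (1 : ℝ)] with x hx
    have hx0 : x ≠ 0 := (lt_of_lt_of_le one_pos hx).ne'
    unfold exNn
    field_simp
  have h := exP2_lim.add hpoly
  rw [zero_add] at h
  exact Tendsto.congr' hev h

lemma exD_ne : ∀ᶠ x in atTop, exampleD x ≠ 0 := by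
  have hpos : ∀ᶠ x in atTop, 0 < exDn x :=
    exDn_lim.eventually (eventually_gt_nhds (by norm_num : (0:ℝ) < 1/16))
  filter_upwards [hpos] with x hx hd0
  have hq := exDn_eq x
  rw [hd0] at hq
  simp [Real.exp_ne_zero] at hq
  rw [hq] at hx
  exact lt_irrefl 0 hx

lemma exMain : Tendsto (fun x : ℝ => Real.exp (2 * x) * (exampleVt x - exampleV x) / x ^ 2)
    atTop (nhds (-64)) := by
  have h := exNn_lim.div exDn_lim (by norm_num : (1:ℝ)/16 ≠ 0)
  have h64 : (-4 : ℝ) / (1/16) = -64 := by norm_num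
  rw [h64] at h
  refine Tendsto.congr' ?_ h
  filter_upwards [exD_ne] with x hd
  simp only [Pi.div_apply]
  rw [exKey x hd]
  exact (div_right_comm _ _ _).symm

/-- Example 8.9: `e^{2x}·(Ṽ(x) − V(x))/x² → −64` as `x → +∞`; in particular
`Ṽ − V = O(x²e^{−2x})`, while `e^{2x}·|Ṽ(x) − V(x)| → +∞`, so `Ṽ − V` is NOT
`O(e^{−2x})` — contradicting the estimate (IV.1.30) of Chadan–Sabatier. -/
theorem example_potential_increment_asymptotics :
    Tendsto (fun x : ℝ => Real.exp (2 * x) * (exampleVt x - exampleV x) / x ^ 2)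
      atTop (nhds (-64)) ∧
    (fun x : ℝ => exampleVt x - exampleV x)
      =O[atTop] (fun x : ℝ => x ^ 2 * Real.exp (-2 * x)) ∧
    Tendsto (fun x : ℝ => Real.exp (2 * x) * |exampleVt x - exampleV x|)
      atTop atTop ∧
    ¬ (fun x : ℝ => exampleVt x - exampleV x)
        =O[atTop] (fun x : ℝ => Real.exp (-2 * x)) := by
  have h1 := exMain
  -- part 3
  have h3 : Tendsto (fun x : ℝ => Real.exp (2 * x) * |exampleVt x - exampleV x|)
      atTop atTop := by
    have habs : Tendsto (fun x : ℝ =>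
        |Real.exp (2 * x) * (exampleVt x - exampleV x) / x ^ 2|) atTop (nhds 64) := by
      have habs' := h1.abs
      rw [show |(-64 : ℝ)| = 64 by norm_num] at habs'
      exact habs'
    have hx2 : Tendsto (fun x : ℝ => x ^ 2) atTop atTop := tendsto_pow_atTop (by norm_num : (2:ℕ) ≠ 0)
    have hmul := habs.pos_mul_atTop (by norm_num : (0:ℝ) < 64) hx2
    refine Tendsto.congr' ?_ hmul
    filter_upwards [eventually_gt_atTop (0 : ℝ)] with x hx
    have hx2' : (x ^ 2 : ℝ) ≠ 0 := by positivity
    rw [abs_div, abs_mul, abs_of_pos (Real.exp_pos _), abs_of_pos (by positivity : (0:ℝ) < x ^ 2),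
      div_mul_cancel₀ _ hx2']
  refine ⟨h1, ?_, h3, ?_⟩
  · -- part 2: isBigO
    refine Asymptotics.isBigO_of_div_tendsto_nhds ?_ (-64) ?_
    · filter_upwards [eventually_gt_atTop (0 : ℝ)] with x hx h0
      exact absurd h0 (by positivity)
    · refine Tendsto.congr' ?_ h1
      filter_upwards [eventually_gt_atTop (0 : ℝ)] with x hx
      have hx2' : (x ^ 2 : ℝ) ≠ 0 := by positivity
      have he : Real.exp (-2 * x) = (Real.exp (2 * x))⁻¹ := by
        rw [← Real.exp_neg]; ring_nf
      simp only [Pi.div_apply, he]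
      rw [eq_div_iff (by positivity : x ^ 2 * (Real.exp (2 * x))⁻¹ ≠ 0)]
      field_simp
  · -- part 4
    intro hO
    obtain ⟨C, hC⟩ := hO.bound
    obtain ⟨x, hCx, hgt⟩ := (hC.and (h3.eventually_gt_atTop C)).exists
    rw [Real.norm_eq_abs, Real.norm_eq_abs, abs_of_pos (Real.exp_pos _)] at hCx
    have hle : Real.exp (2 * x) * |exampleVt x - exampleV x|
        ≤ Real.exp (2 * x) * (C * Real.exp (-2 * x)) := by
      exact mul_le_mul_of_nonneg_left hCx (Real.exp_pos _).le
    have heq : Real.exp (2 * x) * (C * Real.exp (-2 * x)) = C := by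
      rw [show Real.exp (-2 * x) = (Real.exp (2 * x))⁻¹ by rw [← Real.exp_neg, neg_mul],
        mul_comm C, ← mul_assoc, mul_inv_cancel₀ (Real.exp_ne_zero _), one_mul]
    rw [heq] at hle
    linarith
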